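/- Let X be a proper, geodesically complete, Gromov δ-hyperbolic, Busemann metric space with height function h. Let z₀ ∈ ℝ, p ∈ X_{z₀} and M ≥ 288δ. Then for all z ≤ z₀ and for every point p_z ∈ π_z({p}) one has the inclusions D_{2(z₀−z)−M}(p_z) ⊆ π_z(D_M(p)) ⊆ D_{2(z₀−z)+M}(p_z). -/

import Mathlib

open Set Filter MeasureTheory
open scoped ENNReal

noncomputable section

/-- `Φ` is a `(k,c)`-quasi-isometry with respect to the explicit distance
functions `dA` and `dB`. -/
def QIWith {A B : Type*} (dA : A → A → ℝ) (dB : B → B → ℝ) (k c : ℝ) (Φ : A → B) : Prop :=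
  (∀ x x' : A, k⁻¹ * dA x x' - c ≤ dB (Φ x) (Φ x') ∧ dB (Φ x) (Φ x') ≤ k * dA x x' + c) ∧
    ∀ y : B, ∃ x : A, dB (Φ x) y ≤ c

/-- `γ` is a geodesic (parametrized by arclength) on the parameter set `s`,
with respect to the distance function `d`. -/
def IsGeodesicOnD {Z : Type*} (d : Z → Z → ℝ) (γ : ℝ → Z) (s : Set ℝ) : Prop :=
  ∀ t ∈ s, ∀ u ∈ s, d (γ t) (γ u) = |t - u|

/-- `γ` is a geodesic parametrized proportionally to arclength on `s`. -/
def IsAffineGeodesicOnD {Z : Type*} (d : Z → Z → ℝ) (γ : ℝ → Z) (s : Set ℝ) : Prop :=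
  ∃ c : ℝ, 0 ≤ c ∧ ∀ t ∈ s, ∀ u ∈ s, d (γ t) (γ u) = c * |t - u|

/-- Gromov hyperbolicity (four-point condition) for the distance function `d`. -/
def GromovHyperbolicD {Z : Type*} (d : Z → Z → ℝ) (δ : ℝ) : Prop :=
  ∀ x y z w : Z, d x y + d z w ≤ max (d x z + d y w) (d x w + d y z) + 2 * δ

/-- Every two points are joined by a geodesic. -/
def GeodesicSpaceD {Z : Type*} (d : Z → Z → ℝ) : Prop :=
  ∀ x y : Z, ∃ γ : ℝ → Z, γ 0 = x ∧ γ (d x y) = y ∧ IsGeodesicOnD d γ (Icc 0 (d x y))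

/-- Every geodesic segment extends to a bi-infinite geodesic line. -/
def GeodesicallyCompleteD {Z : Type*} (d : Z → Z → ℝ) : Prop :=
  ∀ (γ : ℝ → Z) (a b : ℝ), a ≤ b → IsGeodesicOnD d γ (Icc a b) →
    ∃ γ' : ℝ → Z, IsGeodesicOnD d γ' univ ∧ EqOn γ γ' (Icc a b)

/-- Busemann convexity: the distance between any two geodesics parametrized
proportionally to arclength is a convex function. -/
def BusemannD {Z : Type*} (d : Z → Z → ℝ) : Prop :=
  ∀ (γ₁ γ₂ : ℝ → Z) (s : Set ℝ), Convex ℝ s →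
    IsAffineGeodesicOnD d γ₁ s → IsAffineGeodesicOnD d γ₂ s →
    ConvexOn ℝ s fun t => d (γ₁ t) (γ₂ t)

/-- A proper, geodesically complete, Gromov `δ`-hyperbolic, Busemann metric space
together with a distinguished vertical geodesic ray `ray` from the base point
`ray 0`, determining a boundary point `a ∈ ∂X`. -/
structure HoroSpace (X : Type*) [MetricSpace X] where
  δ : ℝ
  δ_nonneg : 0 ≤ δ
  proper : ProperSpace X
  hyperbolic : GromovHyperbolicD (fun x y : X => dist x y) δ
  geodesic : GeodesicSpaceD (fun x y : X => dist x y)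
  geodComplete : GeodesicallyCompleteD (fun x y : X => dist x y)
  busemann : BusemannD (fun x y : X => dist x y)
  ray : ℝ → X
  ray_geodesic : IsGeodesicOnD (fun x y : X => dist x y) ray (Ici 0)

/-- The height function `h(x) = −limsup_{t→∞} (d(x, V_w(t)) − t)`
(the opposite of the Busemann function of the distinguished ray). -/
def HoroSpace.height {X : Type*} [MetricSpace X] (H : HoroSpace X) (x : X) : ℝ :=
  - Filter.limsup (fun t : ℝ => dist x (H.ray t) - t) Filter.atTop

/-- The disk `D_r(p)` of radius `r` around `p` inside the horosphere through `p`. -/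
def HoroSpace.disk {X : Type*} [MetricSpace X] (H : HoroSpace X) (r : ℝ) (p : X) : Set X :=
  {x : X | H.height x = H.height p ∧ dist x p ≤ r}

/-- The projection `π_z(A)`: points of the horosphere at height `z` whose upward
vertical geodesic ray meets `A`. -/
def HoroSpace.proj {X : Type*} [MetricSpace X] (H : HoroSpace X) (z : ℝ) (A : Set X) :
    Set X :=
  {x : X | H.height x = z ∧ ∃ γ : ℝ → X,
      IsGeodesicOnD (fun a b : X => dist a b) γ (Ici z) ∧
      (∀ t ∈ Ici z, H.height (γ t) = t) ∧ γ z = x ∧ ∃ t ∈ Ici z, γ t ∈ A}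

/-- The horospherical product `X ⋈ Y`: pairs whose heights add up to zero. -/
abbrev HoroProd {X Y : Type*} [MetricSpace X] [MetricSpace Y]
    (HX : HoroSpace X) (HY : HoroSpace Y) : Type _ :=
  {p : X × Y // HX.height p.1 + HY.height p.2 = 0}

/-- `V` is a vertical geodesic of `X ⋈ Y` on the parameter set `s`: a pair of
vertical geodesics of `X` and `Y` at opposite heights, parametrized by arclength
by its height (up to orientation and an additive shift). -/
def IsVerticalOn {X Y : Type*} [MetricSpace X] [MetricSpace Y]
    (HX : HoroSpace X) (HY : HoroSpace Y)
    (V : ℝ → HoroProd HX HY) (s : Set ℝ) : Prop :=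
  IsGeodesicOnD (fun a b : X => dist a b) (fun t => (V t).1.1) s ∧
  IsGeodesicOnD (fun a b : Y => dist a b) (fun t => (V t).1.2) s ∧
  ∀ t ∈ s, ∀ u ∈ s, |HX.height ((V t).1.1) - HX.height ((V u).1.1)| = |t - u|

/-- A distance `d_⋈` on `X ⋈ Y` induced by an admissible norm: the height is
`1`-Lipschitz, `2·d_⋈ ≥ d_X + d_Y`, `d_⋈` agrees with
`d_X + d_Y − Δh` up to a bounded additive constant, and vertical geodesics of
`X ⋈ Y` are geodesics for `d_⋈`. -/
structure HoroMetric {X Y : Type*} [MetricSpace X] [MetricSpace Y]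
    (HX : HoroSpace X) (HY : HoroSpace Y) where
  d : HoroProd HX HY → HoroProd HX HY → ℝ
  d_self : ∀ p, d p p = 0
  d_comm : ∀ p q, d p q = d q p
  d_triangle : ∀ p q r, d p r ≤ d p q + d q r
  eq_of_d : ∀ p q, d p q = 0 → p = q
  height_lip : ∀ p q, |HX.height p.1.1 - HX.height q.1.1| ≤ d p q
  two_d_ge : ∀ p q, dist p.1.1 q.1.1 + dist p.1.2 q.1.2 ≤ 2 * d p q
  C : ℝ
  C_nonneg : 0 ≤ C
  approx : ∀ p q,
    |d p q - (dist p.1.1 q.1.1 + dist p.1.2 q.1.2 -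
      |HX.height p.1.1 - HX.height q.1.1|)| ≤ C
  vertical_geodesic : ∀ (V : ℝ → HoroProd HX HY) (s : Set ℝ),
    IsVerticalOn HX HY V s → ∀ t ∈ s, ∀ u ∈ s, d (V t) (V u) = |t - u|

/-- `γ` is a `(k,c)`-quasigeodesic on the parameter set `s`. -/
def IsQGOn {Z : Type*} (d : Z → Z → ℝ) (k c : ℝ) (γ : ℝ → Z) (s : Set ℝ) : Prop :=
  ∀ t ∈ s, ∀ u ∈ s,
    k⁻¹ * |t - u| - c ≤ d (γ t) (γ u) ∧ d (γ t) (γ u) ≤ k * |t - u| + c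

/-- `γ` is continuous on `s` with respect to the distance function `d`. -/
def ContOnD {Z : Type*} (d : Z → Z → ℝ) (γ : ℝ → Z) (s : Set ℝ) : Prop :=
  ∀ t ∈ s, ∀ ε > (0 : ℝ), ∃ η > (0 : ℝ), ∀ u ∈ s, |u - t| < η → d (γ t) (γ u) < ε

/-- `γ : [a,b] → Z` is `ε`-monotone with respect to the height function `hgt`:
equal heights force parameters to be `ε·(b−a)`-close. -/
def EpsMonotoneOn {Z : Type*} (hgt : Z → ℝ) (ε : ℝ) (γ : ℝ → Z) (a b : ℝ) : Prop :=
  ∀ t₁ ∈ Icc a b, ∀ t₂ ∈ Icc a b, hgt (γ t₁) = hgt (γ t₂) → |t₁ - t₂| ≤ ε * (b - a)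

/-- The closed `r`-neighbourhood of `A` with respect to the distance function `d`. -/
def nbhdD {Z : Type*} (d : Z → Z → ℝ) (r : ℝ) (A : Set Z) : Set Z :=
  {p : Z | ∃ a ∈ A, d p a ≤ r}

open scoped Topology

/-! The outer inclusion is the triangle inequality along the vertical rays from `p_z` to `p`
and from `x` to a point of `D_M(p)`. For the inner one, let `γ` be the vertical ray through
`p_z` and `p`, and `x` a point at height `z` with `d(x, p_z) ≤ 2(z₀ - z)`. Join `x` to `γ(T)`
for large `T`. The four-point condition puts the point of `[x, γ(T)]` at distance `T - z₀`
from `γ(T)` within `4δ` of `p`. Busemann convexity makes the height concave along geodesics,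
so these segments are almost vertical, and their points at distance `z₀ - z` from `x` lie
within `8δ + O(1/T)` of `p`. By properness the segments subconverge to a vertical ray from
`x` passing within `8δ ≤ M` of `p`. -/

section Geodesic

variable {X : Type*} [MetricSpace X]

theorem IsGeodesicOnD.dist_eq_sub {γ : ℝ → X} {S : Set ℝ}
    (hγ : IsGeodesicOnD (fun a b : X => dist a b) γ S) {s u : ℝ} (hs : s ∈ S) (hu : u ∈ S)
    (hsu : s ≤ u) : dist (γ s) (γ u) = u - s := by
  rw [show dist (γ s) (γ u) = |s - u| from hγ s hs u hu, abs_sub_comm,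
    abs_of_nonneg (sub_nonneg.2 hsu)]

theorem exists_tendsto_geodesic_ray [ProperSpace X] {x : X} {σ : ℕ → ℝ → X} {L : ℕ → ℝ}
    (hL : Tendsto L atTop atTop) (hσ0 : ∀ n, σ n 0 = x)
    (hσ : ∀ n, IsGeodesicOnD (fun a b : X => dist a b) (σ n) (Icc 0 (L n))) :
    ∃ (𝒰 : Ultrafilter ℕ) (ρ : ℝ → X), (𝒰 : Filter ℕ) ≤ atTop ∧ ρ 0 = x ∧
      IsGeodesicOnD (fun a b : X => dist a b) ρ (Ici 0) ∧
      ∀ s, 0 ≤ s → Tendsto (fun n => σ n s) 𝒰 (𝓝 (ρ s)) := by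
  set 𝒰 := Ultrafilter.of (atTop : Filter ℕ)
  have h𝒰 : (𝒰 : Filter ℕ) ≤ atTop := Ultrafilter.of_le _
  have hmem : ∀ s, 0 ≤ s → ∀ᶠ n in (𝒰 : Filter ℕ), s ∈ Icc 0 (L n) :=
    fun s hs => h𝒰 ((hL.eventually_ge_atTop s).mono fun n hn => ⟨hs, hn⟩)
  have hlim : ∀ s, ∃ y, 0 ≤ s → Tendsto (fun n => σ n s) 𝒰 (𝓝 y) := by
    intro s
    by_cases hs : 0 ≤ s
    · have hball : ((𝒰.map fun n => σ n s : Ultrafilter X) : Filter X) ≤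
          𝓟 (Metric.closedBall x s) := by
        rw [Ultrafilter.coe_map, le_principal_iff, mem_map]
        filter_upwards [hmem s hs] with n hn
        rw [mem_preimage, Metric.mem_closedBall, ← hσ0 n, dist_comm,
          (hσ n).dist_eq_sub ⟨le_rfl, hs.trans hn.2⟩ hn hs]
        simp
      obtain ⟨y, -, hy⟩ := (isCompact_closedBall x s).ultrafilter_le_nhds _ hball
      exact ⟨y, fun _ => hy⟩
    · exact ⟨x, fun h => absurd h hs⟩
  choose ρ hρ using hlim
  refine ⟨𝒰, ρ, h𝒰, ?_, fun s hs u hu => ?_, hρ⟩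
  · exact tendsto_nhds_unique (hρ 0 le_rfl) (by simp only [hσ0]; exact tendsto_const_nhds)
  · refine tendsto_nhds_unique ((hρ s hs).dist (hρ u hu)) (tendsto_const_nhds.congr' ?_)
    filter_upwards [hmem s hs, hmem u hu] with n hsn hun
    exact (hσ n s hsn u hun).symm

end Geodesic

section Hyperbolic

variable {X : Type*} [MetricSpace X]

def gromovProduct (w x y : X) : ℝ := (dist x w + dist y w - dist x y) / 2

theorem GromovHyperbolicD.min_gromovProduct_sub_le {δ : ℝ}
    (hX : GromovHyperbolicD (fun a b : X => dist a b) δ) (w x y z : X) :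
    min (gromovProduct w x z) (gromovProduct w z y) - δ ≤ gromovProduct w x y := by
  have h := hX x y z w
  have hzy := dist_comm z y
  simp only [gromovProduct] at h ⊢
  rcases max_cases (dist x z + dist y w) (dist x w + dist y z) with ⟨hmax, _⟩ | ⟨hmax, _⟩ <;>
    rw [hmax] at h
  · linarith [min_le_left ((dist x w + dist z w - dist x z) / 2)
      ((dist z w + dist y w - dist z y) / 2)]
  · linarith [min_le_right ((dist x w + dist z w - dist x z) / 2)
      ((dist z w + dist y w - dist z y) / 2)]

/-- Since `x` is close to `w`, the four-point condition gives `(p|x)_y ≥ a - δ`, and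
applied once more, `(p|q)_y ≥ a - 2δ`. -/
theorem GromovHyperbolicD.dist_le_four_mul {δ : ℝ}
    (hX : GromovHyperbolicD (fun a b : X => dist a b) δ) {w x y p q : X} {a b : ℝ}
    (hwp : dist w p = b) (hpy : dist p y = a) (hwy : dist w y = b + a)
    (hxw : dist x w ≤ 2 * b) (hxy : b + a ≤ dist x y)
    (hqy : dist q y = a) (hxq : dist x q + a = dist x y) : dist q p ≤ 4 * δ := by
  have hpx : a - δ ≤ gromovProduct y p x := by
    refine le_trans (sub_le_sub_right (le_min ?_ ?_) δ) (hX.min_gromovProduct_sub_le y p x w)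
    · simp only [gromovProduct]; rw [dist_comm p w]; linarith
    · simp only [gromovProduct]; rw [dist_comm w x]; linarith
  have hδ : 0 ≤ δ := by simpa using hX p p p p
  have hxq' : a - δ ≤ gromovProduct y x q := by simp only [gromovProduct]; linarith
  have hpq := le_trans (sub_le_sub_right (le_min hpx hxq') δ)
    (hX.min_gromovProduct_sub_le y p q x)
  simp only [gromovProduct] at hpq
  rw [dist_comm p q] at hpq
  linarith

end Hyperbolic

namespace HoroSpace

variable {X : Type*} [MetricSpace X] (H : HoroSpace X)

theorem tendsto_dist_ray_sub (x : X) :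
    Tendsto (fun s => dist x (H.ray s) - s) atTop (𝓝 (-H.height x)) := by
  have hray : ∀ s u : ℝ, 0 ≤ s → s ≤ u → dist (H.ray s) (H.ray u) = u - s :=
    fun s u hs hsu => H.ray_geodesic.dist_eq_sub (mem_Ici.2 hs) (mem_Ici.2 (hs.trans hsu)) hsu
  set g : ℝ → ℝ := fun s => dist x (H.ray (max s 0)) - max s 0
  have hanti : Antitone g := fun s u hsu => by
    have := dist_triangle x (H.ray (max s 0)) (H.ray (max u 0))
    rw [hray _ _ (le_max_right _ _) (max_le_max_right 0 hsu)] at this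
    simp only [g]
    linarith
  have hbdd : BddBelow (range g) := by
    refine ⟨-dist x (H.ray 0), ?_⟩
    rintro _ ⟨s, rfl⟩
    have := dist_triangle_left (H.ray 0) (H.ray (max s 0)) x
    rw [hray _ _ le_rfl (le_max_right _ _)] at this
    simp only [g]
    linarith
  have heq : g =ᶠ[atTop] fun s => dist x (H.ray s) - s := by
    filter_upwards [eventually_ge_atTop 0] with s hs
    simp only [g, max_eq_left hs]
  have hlim := (tendsto_atTop_ciInf hanti hbdd).congr' heq
  rwa [HoroSpace.height, neg_neg, hlim.limsup_eq]

theorem abs_height_sub_le (x y : X) : |H.height x - H.height y| ≤ dist x y := by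
  have h := ((H.tendsto_dist_ray_sub y).sub (H.tendsto_dist_ray_sub x)).abs
  rw [neg_sub_neg] at h
  refine le_of_tendsto h (Eventually.of_forall fun r => ?_)
  rw [sub_sub_sub_cancel_right, dist_comm x y]
  exact abs_dist_sub_le _ _ _

theorem lipschitzWith_height : LipschitzWith 1 H.height :=
  LipschitzWith.of_dist_le_mul fun x y => by
    simpa [Real.dist_eq] using H.abs_height_sub_le x y

/-- The height is a limit of the negated distances to points of the ray, which are convex
along geodesics by Busemann convexity. -/
theorem concaveOn_height {σ : ℝ → X} {S : Set ℝ} (hS : Convex ℝ S)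
    (hσ : IsGeodesicOnD (fun a b : X => dist a b) σ S) :
    ConcaveOn ℝ S fun t => H.height (σ t) := by
  refine ⟨hS, fun s hs u hu μ ν hμ hν hμν => ?_⟩
  have key : ∀ r, dist (σ (μ • s + ν • u)) (H.ray r) - r ≤
      μ * (dist (σ s) (H.ray r) - r) + ν * (dist (σ u) (H.ray r) - r) := fun r => by
    have hconv := H.busemann σ (fun _ => H.ray r) S hS
      ⟨1, zero_le_one, fun t ht u hu => by rw [one_mul]; exact hσ t ht u hu⟩ ⟨0, le_rfl, by simp⟩
    have := hconv.2 hs hu hμ hν hμν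
    simp only [smul_eq_mul] at this ⊢
    linear_combination this + r * hμν
  have := le_of_tendsto_of_tendsto (H.tendsto_dist_ray_sub _)
    (((H.tendsto_dist_ray_sub _).const_mul μ).add ((H.tendsto_dist_ray_sub _).const_mul ν))
    (Eventually.of_forall key)
  simp only [smul_eq_mul] at this ⊢
  linarith

theorem height_ge_of_geodesic {σ : ℝ → X} {L s : ℝ}
    (hσ : IsGeodesicOnD (fun a b : X => dist a b) σ (Icc 0 L)) (hL : 0 < L) (hs : s ∈ Icc 0 L) :
    H.height (σ 0) + s / L * (H.height (σ L) - H.height (σ 0)) ≤ H.height (σ s) := by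
  have := (H.concaveOn_height (convex_Icc 0 L) hσ).2 (left_mem_Icc.2 hL.le)
    (right_mem_Icc.2 hL.le) (sub_nonneg.2 ((div_le_one hL).2 hs.2)) (div_nonneg hs.1 hL.le)
    (sub_add_cancel 1 _)
  simp only [smul_eq_mul, mul_zero, zero_add, div_mul_cancel₀ _ hL.ne'] at this
  linarith

end HoroSpace

namespace HoroSpace

variable {X : Type*} [MetricSpace X] (H : HoroSpace X)

def IsVerticalRay (γ : ℝ → X) (z : ℝ) : Prop :=
  IsGeodesicOnD (fun a b : X => dist a b) γ (Ici z) ∧ ∀ t ∈ Ici z, H.height (γ t) = t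

variable {H}

theorem IsVerticalRay.dist_eq {γ : ℝ → X} {z s u : ℝ} (hγ : H.IsVerticalRay γ z)
    (hs : z ≤ s) (hsu : s ≤ u) : dist (γ s) (γ u) = u - s :=
  hγ.1.dist_eq_sub (mem_Ici.2 hs) (mem_Ici.2 (hs.trans hsu)) hsu

theorem mem_proj_iff {z : ℝ} {A : Set X} {x : X} :
    x ∈ H.proj z A ↔
      H.height x = z ∧ ∃ γ, H.IsVerticalRay γ z ∧ γ z = x ∧ ∃ t ∈ Ici z, γ t ∈ A := by
  simp only [HoroSpace.proj, IsVerticalRay, mem_ofPred_eq, and_assoc]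

theorem disk_mono {r r' : ℝ} (h : r ≤ r') (p : X) : H.disk r p ⊆ H.disk r' p :=
  fun _ hx => ⟨hx.1, hx.2.trans h⟩

theorem IsVerticalRay.dist_bounds {γ : ℝ → X} {x : X} {z T : ℝ} (hγ : H.IsVerticalRay γ z)
    (hx : H.height x = z) (hT : z ≤ T) :
    T - z ≤ dist x (γ T) ∧ dist x (γ T) ≤ T - z + dist x (γ z) := by
  constructor
  · have := H.abs_height_sub_le x (γ T)
    rw [hx, hγ.2 T hT, abs_sub_comm] at this
    exact (le_abs_self _).trans this
  · have := dist_triangle x (γ z) (γ T)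
    rw [hγ.dist_eq le_rfl hT] at this
    linarith

theorem IsVerticalRay.height_geodesic_ge {γ σ : ℝ → X} {x : X} {z T s : ℝ}
    (hγ : H.IsVerticalRay γ z) (hx : H.height x = z) (hT : z < T)
    (hσ : IsGeodesicOnD (fun a b : X => dist a b) σ (Icc 0 (dist x (γ T))))
    (hσ0 : σ 0 = x) (hσT : σ (dist x (γ T)) = γ T) (hs : s ∈ Icc 0 (dist x (γ T))) :
    z + s - s * dist x (γ z) / dist x (γ T) ≤ H.height (σ s) := by
  obtain ⟨hTL, hLT⟩ := hγ.dist_bounds hx hT.le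
  have hL : 0 < dist x (γ T) := by linarith
  have hsecant := H.height_ge_of_geodesic hσ hL hs
  rw [hσ0, hσT, hx, hγ.2 T hT.le] at hsecant
  refine le_trans ?_ hsecant
  rw [add_sub_assoc, add_le_add_iff_left, div_mul_eq_mul_div, le_div_iff₀ hL, sub_mul,
    div_mul_cancel₀ _ hL.ne']
  nlinarith [hs.1]

theorem IsVerticalRay.dist_geodesic_le {γ σ : ℝ → X} {x : X} {z z₀ T : ℝ}
    (hγ : H.IsVerticalRay γ z) (hx : H.height x = z) (hz : z ≤ z₀) (hT : z₀ < T)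
    (hD : dist x (γ z) ≤ 2 * (z₀ - z))
    (hσ : IsGeodesicOnD (fun a b : X => dist a b) σ (Icc 0 (dist x (γ T))))
    (hσ0 : σ 0 = x) (hσT : σ (dist x (γ T)) = γ T) :
    dist (σ (z₀ - z)) (γ z₀) ≤
      8 * H.δ + (z₀ - z + dist x (γ z)) * dist x (γ z) / dist x (γ T) := by
  set D := dist x (γ z)
  set L := dist x (γ T)
  obtain ⟨hTL, hLT⟩ := hγ.dist_bounds hx (hz.trans hT.le)
  have hL : 0 < L := by linarith
  set s := L - (T - z₀)
  have hs : s ∈ Icc 0 L := ⟨by linarith, by linarith⟩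
  have hq : dist (σ s) (γ z₀) ≤ 4 * H.δ := by
    refine H.hyperbolic.dist_le_four_mul (w := γ z) (x := x) (b := z₀ - z)
      (hγ.dist_eq le_rfl hz) (hγ.dist_eq hz hT.le) ?_ hD (by linarith) ?_ ?_
    · rw [hγ.dist_eq le_rfl (hz.trans hT.le)]; ring
    · rw [← hσT, hσ.dist_eq_sub hs (right_mem_Icc.2 hL.le) hs.2]; ring
    · rw [← hσ0, hσ.dist_eq_sub (left_mem_Icc.2 hL.le) hs hs.1, hσ0]; ring
  have hheight := hγ.height_geodesic_ge hx (hz.trans_lt hT) hσ hσ0 hσT hs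
  have hlip := H.abs_height_sub_le (σ s) (γ z₀)
  rw [hγ.2 z₀ hz] at hlip
  have herr : s * D / L ≤ (z₀ - z + D) * D / L :=
    div_le_div_of_nonneg_right (mul_le_mul_of_nonneg_right (by linarith) dist_nonneg) hL.le
  have hmid : dist (σ (z₀ - z)) (σ s) = s - (z₀ - z) :=
    hσ.dist_eq_sub ⟨by linarith, by linarith⟩ hs (by linarith)
  calc dist (σ (z₀ - z)) (γ z₀) ≤ dist (σ (z₀ - z)) (σ s) + dist (σ s) (γ z₀) :=
        dist_triangle _ _ _
    _ ≤ _ := by linarith [(abs_le.1 (hlip.trans hq)).2]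

/-- The vertical ray from `x` is a limit of geodesics from `x` to points `γ (z₀ + n + 1)`. -/
theorem IsVerticalRay.exists_dist_le {γ : ℝ → X} {x : X} {z z₀ : ℝ} (hγ : H.IsVerticalRay γ z)
    (hx : H.height x = z) (hz : z ≤ z₀) (hD : dist x (γ z) ≤ 2 * (z₀ - z)) :
    ∃ ρ, H.IsVerticalRay ρ z ∧ ρ z = x ∧ dist (ρ z₀) (γ z₀) ≤ 8 * H.δ := by
  have := H.proper
  set D := dist x (γ z)
  set L : ℕ → ℝ := fun n => dist x (γ (z₀ + n + 1))
  have hT : ∀ n : ℕ, z₀ < z₀ + n + 1 := fun n => by linarith [n.cast_nonneg (α := ℝ)]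
  choose σ hσ0 hσT hσ using fun n : ℕ => H.geodesic x (γ (z₀ + n + 1))
  have hL : Tendsto L atTop atTop := by
    refine tendsto_atTop_mono (fun n => (hγ.dist_bounds hx (hz.trans (hT n).le)).1) ?_
    exact tendsto_atTop_add_const_right _ _ (tendsto_atTop_add_const_right _ _
      (tendsto_atTop_add_const_left _ _ tendsto_natCast_atTop_atTop))
  obtain ⟨𝒰, ρ, h𝒰, hρ0, hρ, hlim⟩ := exists_tendsto_geodesic_ray hL hσ0 hσ
  have hheight : ∀ s, 0 ≤ s → H.height (ρ s) = z + s := by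
    intro s hs
    apply le_antisymm
    · have := H.abs_height_sub_le (ρ s) (ρ 0)
      rw [hρ0, hx, dist_comm, ← hρ0, hρ.dist_eq_sub self_mem_Ici (mem_Ici.2 hs) hs] at this
      linarith [le_abs_self (H.height (ρ s) - z)]
    · refine le_of_tendsto_of_tendsto (f := fun n => z + s - s * D / L n) ?_
        ((H.lipschitzWith_height.continuous.tendsto _).comp (hlim s hs)) ?_
      · simpa using ((tendsto_const_nhds.div_atTop hL).const_sub (z + s)).mono_left h𝒰
      · filter_upwards [h𝒰 (hL.eventually_ge_atTop s)] with n hn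
        exact hγ.height_geodesic_ge hx (hz.trans_lt (hT n)) (hσ n) (hσ0 n) (hσT n) ⟨hs, hn⟩
  have hclose : dist (ρ (z₀ - z)) (γ z₀) ≤ 8 * H.δ := by
    refine le_of_tendsto_of_tendsto ((hlim _ (sub_nonneg.2 hz)).dist tendsto_const_nhds)
      ?_ (Eventually.of_forall fun n =>
        hγ.dist_geodesic_le hx hz (hT n) hD (hσ n) (hσ0 n) (hσT n))
    simpa using ((tendsto_const_nhds.div_atTop hL).const_add (8 * H.δ)).mono_left h𝒰
  refine ⟨fun t => ρ (t - z), ⟨fun s hs u hu => ?_, fun t ht => ?_⟩, by simpa using hρ0,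
    by simpa using hclose⟩
  · rw [← sub_sub_sub_cancel_right s u z]
    exact hρ _ (mem_Ici.2 (sub_nonneg.2 hs)) _ (mem_Ici.2 (sub_nonneg.2 hu))
  · simp [hheight (t - z) (sub_nonneg.2 ht)]

theorem proj_disk_subset_disk {z r : ℝ} {p pz : X} (hpz : pz ∈ H.proj z {p}) :
    H.proj z (H.disk r p) ⊆ H.disk (2 * (H.height p - z) + r) pz := by
  obtain ⟨hpzh, γ, hγ, rfl, t, ht, hγt⟩ := mem_proj_iff.1 hpz
  rw [mem_singleton_iff] at hγt
  subst hγt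
  intro x hx
  obtain ⟨hxh, γ', hγ', rfl, s, hs, hhs, hds⟩ := mem_proj_iff.1 hx
  have hst : s = t := by rw [← hγ'.2 s hs, hhs, hγ.2 t ht]
  rw [hst] at hds
  refine ⟨hxh.trans hpzh.symm, ?_⟩
  rw [hγ.2 t ht]
  calc dist (γ' z) (γ z) ≤ dist (γ' z) (γ' t) + dist (γ' t) (γ t) + dist (γ t) (γ z) :=
        dist_triangle4 _ _ _ _
    _ ≤ _ := by
      rw [hγ'.dist_eq le_rfl ht, dist_comm (γ t), hγ.dist_eq le_rfl ht]
      linarith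

theorem disk_subset_proj_disk {z r : ℝ} {p pz : X} (hpz : pz ∈ H.proj z {p})
    (hr : 8 * H.δ ≤ r) : H.disk (2 * (H.height p - z)) pz ⊆ H.proj z (H.disk r p) := by
  obtain ⟨hpzh, γ, hγ, rfl, t, ht, hγt⟩ := mem_proj_iff.1 hpz
  rw [mem_singleton_iff] at hγt
  subst hγt
  rintro x ⟨hxh, hxd⟩
  rw [hγ.2 t ht] at hxd
  obtain ⟨ρ, hρ, rfl, hρt⟩ := hγ.exists_dist_le (hxh.trans hpzh) ht hxd
  exact mem_proj_iff.2 ⟨hxh.trans hpzh, ρ, hρ, rfl, t, ht, by rw [hρ.2 t ht, hγ.2 t ht],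
    hρt.trans hr⟩

end HoroSpace

/-- For `p` at height `z₀` and `M ≥ 288δ`, for all `z ≤ z₀`
and every point `p_z` of the projection of `p` to height `z`, one has
`D_{2(z₀−z)−M}(p_z) ⊆ π_z(D_M(p)) ⊆ D_{2(z₀−z)+M}(p_z)`. -/
theorem statement_14 {X : Type*} [MetricSpace X] (H : HoroSpace X)
    (z₀ : ℝ) (p : X) (hp : H.height p = z₀) (M : ℝ) (hM : 288 * H.δ ≤ M) :
    ∀ z ≤ z₀, ∀ pz ∈ H.proj z {p},
      H.disk (2 * (z₀ - z) - M) pz ⊆ H.proj z (H.disk M p) ∧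
      H.proj z (H.disk M p) ⊆ H.disk (2 * (z₀ - z) + M) pz := by
  intro z _ pz hpz
  subst hp
  have hδ := H.δ_nonneg
  exact ⟨(H.disk_mono (by linarith) pz).trans (H.disk_subset_proj_disk hpz (by linarith)),
    H.proj_disk_subset_disk hpz⟩
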